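/- Let A be a C*-algebra, B ⊆ A a hereditary subalgebra, and a ∈ B a positive element. Suppose there is a nonzero positive x ∈ A with a ⊕ x ≾ a in M₂(A) (Cuntz subequivalence). Then there is a nonzero positive y ∈ B with a ⊕ y ≾ a in M₂(B). -/

import Mathlib

variable {A : Type*} [NonUnitalCStarAlgebra A] [PartialOrder A] [StarOrderedRing A]

/-- A hereditary subalgebra of a C*-algebra. -/
def IsHereditarySubalgebra (A : Type*) [NonUnitalCStarAlgebra A] [PartialOrder A]
    [StarOrderedRing A] (D : Set A) : Prop :=
  IsClosed D ∧ (0 : A) ∈ D ∧ (∀ x ∈ D, ∀ y ∈ D, x + y ∈ D) ∧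
    (∀ (c : ℂ), ∀ x ∈ D, c • x ∈ D) ∧ (∀ x ∈ D, ∀ y ∈ D, x * y ∈ D) ∧
    (∀ x ∈ D, star x ∈ D) ∧
    (∀ x ∈ D, ∀ y : A, 0 ≤ y → y ≤ x → y ∈ D)

/-- `diag a x` is the diagonal 2×2 matrix with entries `a, x`; this realizes `a ⊕ x`. -/
noncomputable def diag2 (a x : A) : Matrix (Fin 2) (Fin 2) A := Matrix.diagonal ![a, x]

/-- Cuntz subequivalence `c ≾ d` in `M₂`, computed with conjugating matrices whose
entries lie in the subset `S` (i.e. in `M₂(S)`), expressed entrywise. -/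
def CuntzLE2 (S : Set A) (c d : Matrix (Fin 2) (Fin 2) A) : Prop :=
  ∀ ε : ℝ, 0 < ε → ∃ v : Matrix (Fin 2) (Fin 2) A, (∀ i j, v i j ∈ S) ∧
    ∀ i j, ‖(v * d * star v - c) i j‖ < ε

/-!
Pick `u` with `u a u* ≈ x` (an entry of an approximate conjugation) and put
`y = (a u*) x (a u*)*`. It lies in `a A a ⊆ B`, and it is nonzero because `x (u a u*) = 0` is
impossible when `u a u* ≈ x`. Multiplying the second row of the witnesses for `a ⊕ x ≾ a` by
`a u*` gives `a ⊕ y ≾ a` in `M₂(A)`. The witnesses are then compressed into `M₂(B)` by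
`r = f(a)` with `f(a) a ≈ a`: the entries of `r v r` lie in `B` because `B` is hereditary, and
conjugation by `r` barely moves `a` and `y`, both being in `a A a`.
-/

section NormedRing

variable {R : Type*} [NonUnitalNormedRing R]

lemma norm_mul_mul_le_of_norm_le_one {r : R} (hr : ‖r‖ ≤ 1) (m : R) : ‖r * m * r‖ ≤ ‖m‖ :=
  norm_mul₃_le.trans <| by
    simpa using mul_le_mul (mul_le_of_le_one_left (norm_nonneg m) hr) hr (norm_nonneg r)
      (norm_nonneg m)

lemma norm_mul_mul_sub_le {r : R} (hr : ‖r‖ ≤ 1) (m : R) :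
    ‖r * m * r - m‖ ≤ ‖r * m - m‖ + ‖m * r - m‖ :=
  calc ‖r * m * r - m‖ = ‖(r * m - m) * r + (m * r - m)‖ := by noncomm_ring
    _ ≤ ‖r * m - m‖ + ‖m * r - m‖ := (norm_add_le _ _).trans <| by
      gcongr
      exact (norm_mul_le _ _).trans (mul_le_of_le_one_right (norm_nonneg _) hr)

lemma IsSelfAdjoint.mul_ne_zero_of_norm_sub_lt [StarRing R] [CStarRing R] {x p : R}
    (hx : IsSelfAdjoint x) (h : ‖p - x‖ < ‖x‖) : x * p ≠ 0 := by
  intro hxp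
  have hx0 : 0 < ‖x‖ := (norm_nonneg _).trans_lt h
  have : ‖x‖ * ‖x‖ < ‖x‖ * ‖x‖ :=
    calc ‖x‖ * ‖x‖ = ‖x * (x - p)‖ := by rw [mul_sub, hxp, sub_zero, hx.norm_mul_self, sq]
      _ ≤ ‖x‖ * ‖p - x‖ := (norm_mul_le _ _).trans_eq (by rw [norm_sub_rev])
      _ < ‖x‖ * ‖x‖ := by gcongr
  exact lt_irrefl _ this

end NormedRing

namespace IsHereditarySubalgebra

variable {B : Set A} (hB : IsHereditarySubalgebra A B)
include hB

def toNonUnitalStarSubalgebra : NonUnitalStarSubalgebra ℂ A where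
  carrier := B
  zero_mem' := hB.2.1
  add_mem' hx hy := hB.2.2.1 _ hx _ hy
  smul_mem' c _ := hB.2.2.2.1 c _
  mul_mem' hx hy := hB.2.2.2.2.1 _ hx _ hy
  star_mem' := hB.2.2.2.2.2.1 _

lemma cfcₙ_mem {a : A} (ha : a ∈ B) (f : ℝ → ℝ) : cfcₙ f a ∈ B :=
  have : IsClosed (hB.toNonUnitalStarSubalgebra : Set A) := hB.1
  _root_.cfcₙ_mem (s := hB.toNonUnitalStarSubalgebra) (𝕜' := ℂ) f ha

lemma star_mul_mul_mem {e : A} (he : e ∈ B) (z : A) : star e * z * e ∈ B := by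
  let S := hB.toNonUnitalStarSubalgebra
  let M : Submodule ℂ A :=
    { carrier := {z | star e * z * e ∈ S}
      zero_mem' := by simp
      add_mem' := fun h₁ h₂ => by simpa [mul_add, add_mul] using add_mem h₁ h₂
      smul_mem' := fun c z (h : star e * z * e ∈ S) => by
        simpa [smul_mul_assoc, mul_smul_comm] using SMulMemClass.smul_mem c h }
  suffices Submodule.span ℂ {z : A | 0 ≤ z} ≤ M from
    this (CStarAlgebra.span_nonneg (A := A) ▸ Submodule.mem_top)
  refine Submodule.span_le.mpr fun z (hz : 0 ≤ z) => hB.2.2.2.2.2.2 (‖z‖ • (star e * e)) ?_ _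
    (star_left_conjugate_nonneg hz e)
    (CStarAlgebra.star_left_conjugate_le_norm_smul hz.isSelfAdjoint)
  change _ ∈ S
  exact_mod_cast SMulMemClass.smul_mem (‖z‖ : ℂ) (mul_mem (star_mem (s := S) he) he)

lemma mul_mul_mem {e f : A} (he : e ∈ B) (hf : f ∈ B) (z : A) : e * z * f ∈ B := by
  let S := hB.toNonUnitalStarSubalgebra
  have polarization : e * z * f = (1 / 2 : ℂ) • (
      (star (star e + f) * z * (star e + f) - (e * z * star e + star f * z * f))
      - Complex.I • (star (star e + Complex.I • f) * z * (star e + Complex.I • f)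
          - (e * z * star e + star f * z * f))) := by
    simp only [star_add, star_smul, star_star, Complex.star_def, Complex.conj_I, mul_add, add_mul,
      smul_mul_assoc, mul_smul_comm, smul_smul, smul_add, smul_sub]
    match_scalars <;> simp; ring
  have hconj {g : A} (hg : g ∈ S) : star g * z * g ∈ S := hB.star_mul_mul_mem hg z
  have he' : star e ∈ S := star_mem (s := S) he
  have hdiag : e * z * star e + star f * z * f ∈ S := by
    simpa using add_mem (hconj he') (hconj (show f ∈ S from hf))
  rw [polarization]
  change _ ∈ S
  exact SMulMemClass.smul_mem _ (sub_mem (sub_mem (hconj (add_mem he' hf)) hdiag)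
    (SMulMemClass.smul_mem _ (sub_mem (hconj (add_mem he' (SMulMemClass.smul_mem _ hf))) hdiag)))

end IsHereditarySubalgebra

lemma exists_norm_cfcₙ_mul_sub_le {a : A} (ha : 0 ≤ a) {η : ℝ} (hη : 0 < η) :
    ∃ f : ℝ → ℝ, ‖cfcₙ f a‖ ≤ 1 ∧ ‖cfcₙ f a * a - a‖ ≤ η := by
  set f : ℝ → ℝ := fun s => min 1 (η⁻¹ * s)
  have hf0 : f 0 = 0 := by simp [f]
  have hf : cfcₙ f a * a - a = cfcₙ (fun s => f s * s - s) a := by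
    rw [cfcₙ_sub _ _ a (by fun_prop) (by simp [hf0]), cfcₙ_mul _ _ a (by fun_prop) hf0,
      cfcₙ_id' ℝ a]
  refine ⟨f, norm_cfcₙ_le fun s hs => ?_, hf ▸ norm_cfcₙ_le fun s hs => ?_⟩ <;>
    have hs0 : 0 ≤ s := quasispectrum_nonneg_of_nonneg a ha s hs
  · rw [Real.norm_eq_abs, abs_le]
    exact ⟨by linarith [le_min zero_le_one (by positivity : 0 ≤ η⁻¹ * s)], min_le_left _ _⟩
  · rw [Real.norm_eq_abs, abs_le]
    rcases le_total 1 (η⁻¹ * s) with h | h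
    · simp [f, min_eq_left h, hη.le]
    · have hsη : s ≤ η := by rwa [inv_mul_le_iff₀ hη, mul_one] at h
      simp only [f, min_eq_right h]
      constructor <;> nlinarith [mul_nonneg (inv_nonneg.mpr hη.le) hs0]

lemma mul_eq_zero_of_star_mul_mul_eq_zero {x m : A} (hx : 0 ≤ x) (h : star m * x * m = 0) :
    x * m = 0 := by
  have hsqrt : CFC.sqrt x * m = 0 := CStarRing.star_mul_self_eq_zero_iff _ |>.mp <|
    calc star (CFC.sqrt x * m) * (CFC.sqrt x * m) = star m * (CFC.sqrt x * CFC.sqrt x) * m := by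
          rw [star_mul, (CFC.sqrt_nonneg x).star_eq]; noncomm_ring
      _ = 0 := by rw [CFC.sqrt_mul_sqrt_self x hx, h]
  rw [← CFC.sqrt_mul_sqrt_self x hx, mul_assoc, hsqrt, mul_zero]

section Diag2

omit [PartialOrder A] [StarOrderedRing A]

lemma diag2_zero_conj_apply (a : A) (v : Matrix (Fin 2) (Fin 2) A) (i j : Fin 2) :
    (v * diag2 a 0 * star v) i j = v i 0 * a * star (v j 0) := by
  simp [diag2, Matrix.mul_apply, Fin.sum_univ_two, Matrix.star_apply]

lemma cuntzLE2_diag2_zero_iff {S : Set A} (hS : 0 ∈ S) {a : A} {c : Matrix (Fin 2) (Fin 2) A} :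
    CuntzLE2 S c (diag2 a 0) ↔ ∀ ε > 0, ∃ w : Fin 2 → A,
      (∀ i, w i ∈ S) ∧ ∀ i j, ‖w i * a * star (w j) - c i j‖ < ε := by
  simp only [CuntzLE2, Matrix.sub_apply, diag2_zero_conj_apply]
  refine forall₂_congr fun ε _ => ⟨fun ⟨v, hvS, hv⟩ => ⟨(v · 0), (hvS · 0), hv⟩,
    fun ⟨w, hwS, hw⟩ => ⟨fun i j => if j = 0 then w i else 0, fun i j => ?_, by simpa using hw⟩⟩
  by_cases hj : j = 0
  · simpa [hj] using hwS i
  · simpa [hj] using hS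

lemma CuntzLE2.of_univ_of_approx {S : Set A} (hS : 0 ∈ S) {a : A} {c : Matrix (Fin 2) (Fin 2) A}
    (h : CuntzLE2 Set.univ c (diag2 a 0))
    (happrox : ∀ η > 0, ∃ r : A, (∀ z, r * z * r ∈ S) ∧ IsSelfAdjoint r ∧ ‖r‖ ≤ 1 ∧
      ‖r * a * r - a‖ ≤ η ∧ ∀ i j, ‖r * c i j * r - c i j‖ ≤ η) :
    CuntzLE2 S c (diag2 a 0) := by
  rw [cuntzLE2_diag2_zero_iff (Set.mem_univ _)] at h
  rw [cuntzLE2_diag2_zero_iff hS]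
  intro ε hε
  obtain ⟨w, -, hw⟩ := h (ε / 2) (by positivity)
  set N := ‖w 0‖ + ‖w 1‖
  have hwN (i : Fin 2) : ‖w i‖ ≤ N := by
    fin_cases i <;> simp [N, norm_nonneg]
  obtain ⟨r, hrS, hr, hr1, hra, hrc⟩ := happrox (ε / 2 / (N ^ 2 + 1)) (by positivity)
  refine ⟨fun i => r * w i * r, fun i => hrS _, fun i j => ?_⟩
  have hsplit : r * w i * r * a * star (r * w j * r) - c i j
      = r * (w i * (r * a * r - a) * star (w j)) * r + r * (w i * a * star (w j) - c i j) * r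
        + (r * c i j * r - c i j) := by
    simp only [star_mul, hr.star_eq]
    noncomm_ring
  have hfirst : ‖w i * (r * a * r - a) * star (w j)‖ ≤ N ^ 2 * (ε / 2 / (N ^ 2 + 1)) := by
    calc _ ≤ ‖w i‖ * ‖r * a * r - a‖ * ‖star (w j)‖ := norm_mul₃_le
      _ ≤ N * (ε / 2 / (N ^ 2 + 1)) * N := by
        rw [norm_star]
        gcongr
        exacts [hwN i, hwN j]
      _ = _ := by ring
  rw [hsplit]
  calc _ ≤ _ := norm_add₃_le
    _ < N ^ 2 * (ε / 2 / (N ^ 2 + 1)) + ε / 2 + ε / 2 / (N ^ 2 + 1) := by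
      refine add_lt_add_of_lt_of_le (add_lt_add_of_le_of_lt ?_ ?_) (hrc i j)
      · exact (norm_mul_mul_le_of_norm_le_one hr1 _).trans hfirst
      · exact (norm_mul_mul_le_of_norm_le_one hr1 _).trans_lt (hw i j)
    _ = ε := by field_simp; ring

lemma CuntzLE2.conj_snd {a x : A} (L : A) (h : CuntzLE2 Set.univ (diag2 a x) (diag2 a 0)) :
    CuntzLE2 Set.univ (diag2 a (L * x * star L)) (diag2 a 0) := by
  rw [cuntzLE2_diag2_zero_iff (Set.mem_univ _)] at h ⊢
  intro ε hε
  set M := ‖L‖ + 1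
  have hM : 1 ≤ M := by simp [M]
  obtain ⟨w, -, hw⟩ := h (ε / M ^ 2) (by positivity)
  refine ⟨![w 0, L * w 1], fun _ => Set.mem_univ _, fun i j => ?_⟩
  have hLM : ‖L‖ ≤ M ^ 2 := by nlinarith [norm_nonneg L]
  have key : ‖![w 0, L * w 1] i * a * star (![w 0, L * w 1] j) - diag2 a (L * x * star L) i j‖
      ≤ M ^ 2 * ‖w i * a * star (w j) - diag2 a x i j‖ := by
    fin_cases i <;> fin_cases j <;> simp only [diag2, Matrix.diagonal_apply] <;> simp
    · exact le_mul_of_one_le_left (norm_nonneg _) (one_le_pow₀ hM)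
    · rw [← mul_assoc]
      exact (norm_mul_le _ _).trans (by rw [norm_star, mul_comm]; gcongr)
    · rw [show L * w 1 * a * star (w 0) = L * (w 1 * a * star (w 0)) by noncomm_ring]
      exact (norm_mul_le _ _).trans (by gcongr)
    · rw [show L * w 1 * a * (star (w 1) * star L) - L * x * star L
          = L * (w 1 * a * star (w 1) - x) * star L by noncomm_ring]
      refine norm_mul₃_le.trans ?_
      rw [norm_star]
      nlinarith [norm_nonneg L, norm_nonneg (w 1 * a * star (w 1) - x)]
  calc _ ≤ _ := key
    _ < M ^ 2 * (ε / M ^ 2) := by gcongr; exact hw i j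
    _ = ε := by field_simp

end Diag2

lemma IsHereditarySubalgebra.cuntzLE2_of_univ {B : Set A} (hB : IsHereditarySubalgebra A B)
    {a : A} (haB : a ∈ B) (ha : 0 ≤ a) (z : A)
    (h : CuntzLE2 Set.univ (diag2 a (a * z * a)) (diag2 a 0)) :
    CuntzLE2 B (diag2 a (a * z * a)) (diag2 a 0) := by
  refine h.of_univ_of_approx hB.2.1 fun η hη => ?_
  set K := ‖a‖ * ‖z‖ + 1
  obtain ⟨f, hf1, hfa⟩ := exists_norm_cfcₙ_mul_sub_le ha (η := η / (2 * K)) (by positivity)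
  set r := cfcₙ f a
  have hr : IsSelfAdjoint r := cfcₙ_predicate f a
  have har : ‖a * r - a‖ = ‖r * a - a‖ := by
    rw [← norm_star]; simp [hr.star_eq, ha.isSelfAdjoint.star_eq]
  have hK : 0 < K := by positivity
  have hη' : η / (2 * K) * K = η / 2 := by field_simp
  have hraz : ‖r * (a * z * a) - a * z * a‖ ≤ η / 2 :=
    calc _ = ‖(r * a - a) * (z * a)‖ := by noncomm_ring
      _ ≤ η / (2 * K) * K := norm_mul_le_of_le hfa <| (norm_mul_le _ _).trans <| by
        rw [mul_comm]; simp [K]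
      _ = η / 2 := hη'
  have hrza : ‖a * z * a * r - a * z * a‖ ≤ η / 2 :=
    calc _ = ‖(a * z) * (a * r - a)‖ := by noncomm_ring
      _ ≤ K * (η / (2 * K)) := norm_mul_le_of_le ((norm_mul_le _ _).trans (by simp [K]))
        (har ▸ hfa)
      _ = η / 2 := by rw [mul_comm, hη']
  have hra : ‖r * a - a‖ ≤ η / 2 := hfa.trans <| by
    rw [div_le_div_iff_of_pos_left hη (by positivity) two_pos]; simp [K]; positivity
  have hrar : ‖r * a * r - a‖ ≤ η := by linarith [norm_mul_mul_sub_le hf1 a]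
  have hrazar : ‖r * (a * z * a) * r - a * z * a‖ ≤ η := by
    linarith [norm_mul_mul_sub_le hf1 (a * z * a)]
  refine ⟨r, hB.mul_mul_mem (hB.cfcₙ_mem haB f) (hB.cfcₙ_mem haB f), hr, hf1, hrar,
    fun i j => ?_⟩
  fin_cases i <;> fin_cases j
  · simpa [diag2] using hrar
  · simpa [diag2] using hη.le
  · simpa [diag2] using hη.le
  · simpa [diag2] using hrazar

/-- If `B ⊆ A` is hereditary, `a ∈ B` is positive, and `a ⊕ x ≾ a` in `M₂(A)` for some
nonzero positive `x ∈ A`, then `a ⊕ y ≾ a` in `M₂(B)` for some nonzero positive `y ∈ B`. -/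
theorem stmt18 (B : Set A) (hB : IsHereditarySubalgebra A B)
    (a : A) (haB : a ∈ B) (ha : 0 ≤ a)
    (x : A) (hx0 : 0 ≤ x) (hxne : x ≠ 0)
    (hsub : CuntzLE2 (Set.univ : Set A) (diag2 a x) (diag2 a 0)) :
    ∃ y ∈ B, 0 ≤ y ∧ y ≠ 0 ∧ CuntzLE2 B (diag2 a y) (diag2 a 0) := by
  obtain ⟨w, -, hw⟩ := (cuntzLE2_diag2_zero_iff (Set.mem_univ _)).mp hsub ‖x‖
    (norm_pos_iff.mpr hxne)
  set u := w 1
  have hu : ‖u * a * star u - x‖ < ‖x‖ := by simpa [diag2] using hw 1 1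
  set L := a * star u with hL
  have hLstar : star L = u * a := by simp [L, ha.isSelfAdjoint.star_eq]
  have hy : L * x * star L = a * (star u * x * u) * a := by rw [hLstar, hL]; noncomm_ring
  refine ⟨L * x * star L, hy ▸ hB.mul_mul_mem haB haB _, star_right_conjugate_nonneg hx0 L,
    fun hy0 => ?_, hy ▸ hB.cuntzLE2_of_univ haB ha _ (hy ▸ hsub.conj_snd L)⟩
  have hxua : x * (u * a) = 0 :=
    mul_eq_zero_of_star_mul_mul_eq_zero hx0 (by rwa [← hLstar, star_star])
  exact hx0.isSelfAdjoint.mul_ne_zero_of_norm_sub_lt hu (by rw [← mul_assoc, hxua, zero_mul])
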